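/- arXiv:1607.05210 — 2 statements merged into one kernel-verified Lean document; each statement's English description precedes it below -/
import Mathlib

section
/- (Two-level distributed HAPOD error bound) Let S = S_1 ⊎ ... ⊎ S_r be a partition of a finite family of vectors in a finite-dimensional Hilbert space V. For each i, let Q_i be the set of scaled POD modes of S_i with ℓ²-truncation error at most ε_i (i.e., ∑_{s∈S_i}‖s − P_i s‖² ≤ ε_i² with P_i the projection onto span Q_i). Let P be the projection onto the span of the POD modes of ⋃_i Q_i with truncation error at most ε_ρ. Then ∑_{s∈S} ‖s − P(s)‖² ≤ ε_ρ² + ∑_{i=1}^r ε_i². -/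
/-!
Let `P` be the orthogonal projection onto the complement of the final HAPOD space; it is linear
and does not increase norms. If `s m = ∑ j, σ j λ j m • φ j` with orthonormal right singular
vectors `λ j`, the total squared residual `∑ m, ‖P (s m)‖²` equals `∑ j, ‖P (σ j • φ j)‖²`.
Splitting off the modes discarded by a POD bounds it by their energy plus the residual of the
retained scaled modes. For each local POD this gives `ε i²` plus the residual of the modes
kept in `Q i`; for the root POD of all retained modes it gives `ερ²`, since `P` annihilates
the modes kept there.
-/

open Finset RealInnerProductSpace

section

variable {E : Type*} [NormedAddCommGroup E] [InnerProductSpace ℝ E]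

theorem sum_norm_sq_sum_smul_of_orthonormal {ι κ : Type*} [Fintype ι] [Fintype κ]
    {lam : ι → EuclideanSpace ℝ κ} (hlam : Orthonormal ℝ lam) (v : ι → E) :
    ∑ m, ‖∑ j, lam j m • v j‖ ^ 2 = ∑ j, ‖v j‖ ^ 2 := by
  classical
  have hrows : ∀ j j', ∑ m, lam j m * lam j' m = if j = j' then 1 else 0 := fun j j' => by
    simpa [PiLp.inner_apply, mul_comm] using orthonormal_iff_ite.mp hlam j j'
  calc ∑ m, ‖∑ j, lam j m • v j‖ ^ 2
      = ∑ m, ∑ j, ∑ j', lam j m * lam j' m * ⟪v j', v j⟫ := by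
        simp only [← real_inner_self_eq_norm_sq, sum_inner, inner_sum, real_inner_smul_left,
          real_inner_smul_right, mul_assoc]
    _ = ∑ j, ∑ j', (∑ m, lam j m * lam j' m) * ⟪v j', v j⟫ := by
        simp only [sum_mul]
        rw [sum_comm]
        exact sum_congr rfl fun _ _ => sum_comm
    _ = ∑ j, ‖v j‖ ^ 2 := by simp [hrows]

theorem Fin.sum_filter_not_le_eq_sum_castLE {M : Type*} [AddCommMonoid M] {N k : ℕ} (hN : N ≤ k)
    (f : Fin k → M) :
    ∑ j ∈ univ.filter (fun j : Fin k => ¬ N ≤ (j : ℕ)), f j = ∑ n : Fin N, f (Fin.castLE hN n) :=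
  calc ∑ j ∈ univ.filter (fun j : Fin k => ¬ N ≤ (j : ℕ)), f j
      = ∑ j ∈ univ.map (Fin.castLEEmb hN), f j := by
        congr 1
        ext j
        simpa using ⟨fun h => ⟨⟨j, h⟩, rfl⟩, by rintro ⟨n, rfl⟩; exact n.isLt⟩
    _ = ∑ n : Fin N, f (Fin.castLE hN n) := sum_map _ _ _

variable {F : Type*} [NormedAddCommGroup F] [InnerProductSpace ℝ F]

theorem sum_norm_sq_map_sum_mul_smul {ι κ 𝓕 : Type*} [Fintype ι] [Fintype κ] [FunLike 𝓕 E F]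
    [LinearMapClass 𝓕 ℝ E F] (T : 𝓕) (σ : ι → ℝ) (φ : ι → E) {lam : ι → EuclideanSpace ℝ κ}
    (hlam : Orthonormal ℝ lam) :
    ∑ m, ‖T (∑ j, (σ j * lam j m) • φ j)‖ ^ 2 = ∑ j, ‖T (σ j • φ j)‖ ^ 2 := by
  simp only [map_sum, mul_comm (σ _), mul_smul, map_smul]
  exact sum_norm_sq_sum_smul_of_orthonormal hlam _

theorem sum_norm_sq_map_le_of_truncation {κ 𝓕 : Type*} [Fintype κ] [FunLike 𝓕 E F]
    [LinearMapClass 𝓕 ℝ E F] (T : 𝓕) (hT : ∀ x, ‖T x‖ ≤ ‖x‖) {k N : ℕ} (hN : N ≤ k)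
    (σ : Fin k → ℝ) (φ : Fin k → E) (hφ : ∀ j, ‖φ j‖ ≤ 1)
    {lam : Fin k → EuclideanSpace ℝ κ} (hlam : Orthonormal ℝ lam) {δ : ℝ}
    (htail : ∑ j ∈ univ.filter (fun j : Fin k => N ≤ (j : ℕ)), σ j ^ 2 ≤ δ) :
    ∑ m, ‖T (∑ j, (σ j * lam j m) • φ j)‖ ^ 2
      ≤ δ + ∑ n : Fin N, ‖T (σ (Fin.castLE hN n) • φ (Fin.castLE hN n))‖ ^ 2 := by
  have hmode : ∀ j, ‖T (σ j • φ j)‖ ^ 2 ≤ σ j ^ 2 := fun j => by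
    rw [← sq_abs (σ j)]
    refine pow_le_pow_left₀ (norm_nonneg _) ((hT _).trans ?_) 2
    rw [norm_smul, Real.norm_eq_abs]
    exact mul_le_of_le_one_right (abs_nonneg _) (hφ j)
  rw [sum_norm_sq_map_sum_mul_smul T σ φ hlam,
    ← sum_filter_add_sum_filter_not _ (fun j : Fin k => N ≤ (j : ℕ)), Fin.sum_filter_not_le_eq_sum_castLE hN]
  exact add_le_add_left ((sum_le_sum fun j _ => hmode j).trans htail) _

end

theorem distributed_hapod_error_bound_general
    {V : Type*} [NormedAddCommGroup V] [InnerProductSpace ℝ V] [FiniteDimensional ℝ V]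
    {r : ℕ} (k N : Fin r → ℕ) (hN : ∀ i, N i ≤ k i)
    (s : ∀ i, Fin (k i) → V)
    (σ : ∀ i, Fin (k i) → ℝ) (φ : ∀ i, Fin (k i) → V)
    (lam : ∀ i, Fin (k i) → EuclideanSpace ℝ (Fin (k i)))
    (hφ : ∀ i, Orthonormal ℝ (φ i)) (hlam : ∀ i, Orthonormal ℝ (lam i))
    (hs : ∀ i m, s i m = ∑ j, (σ i j * lam i j m) • φ i j)
    (ε : Fin r → ℝ)
    (hloc : ∀ i, ∑ j ∈ univ.filter (fun j : Fin (k i) => N i ≤ (j : ℕ)), σ i j ^ 2 ≤ ε i ^ 2)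
    {K : ℕ} (e : ((i : Fin r) × Fin (N i)) ≃ Fin K)
    (τ : Fin K → ℝ) (Φ : Fin K → V) (μ : Fin K → EuclideanSpace ℝ (Fin K))
    (hΦ : Orthonormal ℝ Φ) (hμ : Orthonormal ℝ μ)
    (hQ : ∀ i (n : Fin (N i)),
      σ i (Fin.castLE (hN i) n) • φ i (Fin.castLE (hN i) n)
        = ∑ jK, (τ jK * μ jK (e ⟨i, n⟩)) • Φ jK)
    (M : ℕ) (hM : M ≤ K) (ερ : ℝ)
    (hroot : ∑ jK ∈ univ.filter (fun jK : Fin K => M ≤ (jK : ℕ)), τ jK ^ 2 ≤ ερ ^ 2) :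
    ∑ i, ∑ m, ‖s i m - (Submodule.orthogonalProjectionOnto
        (Submodule.span ℝ (Set.range fun n : Fin M => Φ (Fin.castLE hM n))) (s i m) : V)‖ ^ 2
      ≤ ερ ^ 2 + ∑ i, ε i ^ 2 := by
  set W := Submodule.span ℝ (Set.range fun n : Fin M => Φ (Fin.castLE hM n))
  set P := Wᗮ.starProjection
  set q : (i : Fin r) × Fin (N i) → V :=
    fun p => σ p.1 (Fin.castLE (hN p.1) p.2) • φ p.1 (Fin.castLE (hN p.1) p.2)
  have hP : ∀ x, ‖P x‖ ≤ ‖x‖ := Wᗮ.norm_starProjection_apply_le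
  have hlocal : ∀ i, ∑ m, ‖P (s i m)‖ ^ 2 ≤ ε i ^ 2 + ∑ n, ‖P (q ⟨i, n⟩)‖ ^ 2 := fun i => by
    simpa only [hs] using sum_norm_sq_map_le_of_truncation P hP (hN i) (σ i) (φ i)
      (fun j => ((hφ i).1 j).le) (hlam i) (hloc i)
  have hretained : ∑ i, ∑ n, ‖P (q ⟨i, n⟩)‖ ^ 2 ≤ ερ ^ 2 := by
    have hq : ∀ jK, q (e.symm jK) = ∑ l, (τ l * μ l jK) • Φ l := fun jK => by
      simpa using hQ (e.symm jK).1 (e.symm jK).2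
    have hkill : ∀ n : Fin M, P (Φ (Fin.castLE hM n)) = 0 := fun n =>
      Submodule.starProjection_orthogonal_apply_eq_zero (Submodule.subset_span ⟨n, rfl⟩)
    calc ∑ i, ∑ n, ‖P (q ⟨i, n⟩)‖ ^ 2 = ∑ jK, ‖P (q (e.symm jK))‖ ^ 2 := by
          rw [← Fintype.sum_sigma (fun p => ‖P (q p)‖ ^ 2)]
          exact (e.symm.sum_comp _).symm
      _ ≤ ερ ^ 2 + ∑ n : Fin M, ‖P (τ (Fin.castLE hM n) • Φ (Fin.castLE hM n))‖ ^ 2 := by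
          simpa only [hq] using sum_norm_sq_map_le_of_truncation P hP hM τ Φ
            (fun l => (hΦ.1 l).le) hμ hroot
      _ = ερ ^ 2 := by simp [hkill]
  calc ∑ i, ∑ m, ‖s i m - (W.orthogonalProjectionOnto (s i m) : V)‖ ^ 2
      = ∑ i, ∑ m, ‖P (s i m)‖ ^ 2 := by
        simp only [P, Submodule.starProjection_orthogonal_val, ← Submodule.starProjection_apply]
    _ ≤ ∑ i, (ε i ^ 2 + ∑ n, ‖P (q ⟨i, n⟩)‖ ^ 2) := sum_le_sum fun i _ => hlocal i
    _ ≤ ερ ^ 2 + ∑ i, ε i ^ 2 := by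
        rw [sum_add_distrib, add_comm]
        exact add_le_add_left hretained _

/-- two-level distributed HAPOD error bound: if each local family `s i` is
compressed by a POD with ℓ²-truncation error at most `ε i` (keeping the first `N i` scaled
modes `σᵢⱼ • φᵢⱼ`), and the concatenation of all retained scaled modes is compressed by a
second POD with truncation error at most `ερ` (keeping `M` modes `Φ`), then the total
squared projection error of all snapshots onto the final HAPOD space is at most
`ερ² + ∑ᵢ εᵢ²`. -/
theorem distributed_hapod_error_bound
    {V : Type*} [NormedAddCommGroup V] [InnerProductSpace ℝ V] [FiniteDimensional ℝ V]
    {r : ℕ} (k N : Fin r → ℕ) (hN : ∀ i, N i ≤ k i)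
    (s : ∀ i, Fin (k i) → V)
    (σ : ∀ i, Fin (k i) → ℝ) (φ : ∀ i, Fin (k i) → V)
    (lam : ∀ i, Fin (k i) → EuclideanSpace ℝ (Fin (k i)))
    (hσa : ∀ i, Antitone (σ i)) (hσ0 : ∀ i j, 0 ≤ σ i j)
    (hφ : ∀ i, Orthonormal ℝ (φ i)) (hlam : ∀ i, Orthonormal ℝ (lam i))
    (hs : ∀ i m, s i m = ∑ j, (σ i j * lam i j m) • φ i j)
    (ε : Fin r → ℝ)
    (hloc : ∀ i, ∑ j ∈ univ.filter (fun j : Fin (k i) => N i ≤ (j : ℕ)), σ i j ^ 2 ≤ ε i ^ 2)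
    {K : ℕ} (e : ((i : Fin r) × Fin (N i)) ≃ Fin K)
    (τ : Fin K → ℝ) (Φ : Fin K → V) (μ : Fin K → EuclideanSpace ℝ (Fin K))
    (hτa : Antitone τ) (hτ0 : ∀ j, 0 ≤ τ j)
    (hΦ : Orthonormal ℝ Φ) (hμ : Orthonormal ℝ μ)
    (hQ : ∀ i (n : Fin (N i)),
      σ i (Fin.castLE (hN i) n) • φ i (Fin.castLE (hN i) n)
        = ∑ jK, (τ jK * μ jK (e ⟨i, n⟩)) • Φ jK)
    (M : ℕ) (hM : M ≤ K) (ερ : ℝ)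
    (hroot : ∑ jK ∈ univ.filter (fun jK : Fin K => M ≤ (jK : ℕ)), τ jK ^ 2 ≤ ερ ^ 2) :
    ∑ i, ∑ m, ‖s i m - (Submodule.orthogonalProjectionOnto
        (Submodule.span ℝ (Set.range fun n : Fin M => Φ (Fin.castLE hM n))) (s i m) : V)‖ ^ 2
      ≤ ερ ^ 2 + ∑ i, ε i ^ 2 :=
  distributed_hapod_error_bound_general k N hN s σ φ lam hφ hlam hs ε hloc e τ Φ μ hΦ hμ hQ M hM ερ
    hroot
end

section
/- (Two-level HAPOD low-rank factorization) Let S = S_1 ⊎ ... ⊎ S_r with local scaled POD modes Q_i (tolerance ε_i, projections P_i, right-singular factor Λ_i with Λ_i*Λ_i = Id), and let Ψ, Λ be the retained scaled left- and right-singular factors of the concatenation [Q_1,...,Q_r] with tolerance ε_ρ. Define Λ̃ := diag(Λ_1,...,Λ_r) ∘ Λ. Then ‖S̲ − Ψ ∘ Λ̃*‖_HS² ≤ ε_ρ² + ∑_{i=1}^r ε_i², where S̲ is the full snapshot map. -/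
/-!
Rotate each block of the coefficient space by the local right-singular vectors `lam i j`,
i.e. compute the Hilbert–Schmidt norm on the columns of `diag(Λ₁, …, Λᵣ)`. On the column of a
discarded local mode (`N i ≤ j`) the factorization vanishes and the error is `σ i j • φ i j`.
On the column of a retained local mode, `σ i j • φ i j` is a column of the concatenated modes,
and the error is the discarded part of its root SVD, `∑_{jK ≥ M} τ jK μ jK(i, j) Φ jK`.
Summing squares, the first kind contributes `∑_{j ≥ N i} σ i j ²`, and the second
`∑_{jK ≥ M} τ jK ²` because each `μ jK` has unit norm.
-/

open Finset

/-- Hilbert–Schmidt (Frobenius) inner product `⟨A, B⟩ = tr(A* B)`. -/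
noncomputable def frobInner {W V : Type*}
    [NormedAddCommGroup W] [InnerProductSpace ℝ W] [FiniteDimensional ℝ W]
    [NormedAddCommGroup V] [InnerProductSpace ℝ V] [FiniteDimensional ℝ V]
    (A B : W →ₗ[ℝ] V) : ℝ :=
  LinearMap.trace ℝ W (LinearMap.adjoint A ∘ₗ B)

open RealInnerProductSpace

theorem frobInner_self_eq_sum_norm_sq {ι W V : Type*} [Fintype ι]
    [NormedAddCommGroup W] [InnerProductSpace ℝ W] [FiniteDimensional ℝ W]
    [NormedAddCommGroup V] [InnerProductSpace ℝ V] [FiniteDimensional ℝ V]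
    (A : W →ₗ[ℝ] V) (b : OrthonormalBasis ι ℝ W) :
    frobInner A A = ∑ i, ‖A (b i)‖ ^ 2 := by
  rw [frobInner, LinearMap.trace_eq_sum_inner _ b]
  simp [LinearMap.adjoint_inner_right]

theorem Fin.sum_castLE_add_sum_filter_le {M K : ℕ} (h : M ≤ K) {β : Type*} [AddCommMonoid β]
    (f : Fin K → β) :
    ∑ n : Fin M, f (Fin.castLE h n) + ∑ j ∈ univ.filter (fun j : Fin K => M ≤ (j : ℕ)), f j
      = ∑ j, f j := by
  rw [← sum_filter_not_add_sum_filter univ (fun j : Fin K => M ≤ (j : ℕ))]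
  congr 1
  symm
  refine sum_bij' (fun j hj => ⟨j, by simpa using hj⟩) (fun n _ => Fin.castLE h n)
    ?_ ?_ ?_ ?_ ?_ <;> simp

theorem Fin.castLE_ne_of_le {M K : ℕ} (h : M ≤ K) (n : Fin M) {j : Fin K} (hj : M ≤ (j : ℕ)) :
    Fin.castLE h n ≠ j := by
  rw [Ne, Fin.ext_iff, Fin.val_castLE]
  omega

section Orthonormal

variable {κ ι : Type*} [Fintype ι]

theorem Orthonormal.sum_apply_mul_apply [DecidableEq κ] {u : κ → EuclideanSpace ℝ ι}
    (hu : Orthonormal ℝ u) (j j' : κ) :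
    ∑ m, u j m * u j' m = if j = j' then 1 else 0 := by
  rw [← orthonormal_iff_ite.mp hu j j', PiLp.inner_apply]
  simp [mul_comm]

theorem Orthonormal.sum_sum_mul_apply_sq {u : κ → EuclideanSpace ℝ ι} (hu : Orthonormal ℝ u)
    (a : κ → ℝ) (s : Finset κ) :
    ∑ m, ∑ j ∈ s, (a j * u j m) ^ 2 = ∑ j ∈ s, a j ^ 2 := by
  classical
  rw [sum_comm]
  refine sum_congr rfl fun j _ => ?_
  simp_rw [mul_pow, ← mul_sum, sq (u j _), hu.sum_apply_mul_apply, if_pos, mul_one]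

theorem Orthonormal.sum_smul_eq_of_forall_eq_sum [Fintype κ] [DecidableEq κ]
    {V : Type*} [AddCommGroup V] [Module ℝ V] {u : κ → EuclideanSpace ℝ ι}
    (hu : Orthonormal ℝ u) (σ : κ → ℝ) (φ : κ → V) {w : ι → V}
    (hw : ∀ m, w m = ∑ j, (σ j * u j m) • φ j) (j : κ) :
    ∑ m, u j m • w m = σ j • φ j := by
  simp_rw [hw, smul_sum, smul_smul]
  rw [sum_comm]
  simp_rw [← sum_smul, mul_left_comm _ (σ _), ← mul_sum, hu.sum_apply_mul_apply]
  simp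

theorem Orthonormal.transpose_sum_apply_mul_apply [DecidableEq ι]
    {u : ι → EuclideanSpace ℝ ι} (hu : Orthonormal ℝ u) (m m' : ι) :
    ∑ j, u j m * u j m' = if m = m' then 1 else 0 := by
  let U : Matrix ι ι ℝ := Matrix.of fun j m => u j m
  have hUUt : U * U.transpose = 1 := by
    ext j j'
    simp [U, Matrix.mul_apply, hu.sum_apply_mul_apply, Matrix.one_apply]
  have hUtU : U.transpose * U = 1 := mul_eq_one_comm.mp hUUt
  simpa [U, Matrix.mul_apply, Matrix.one_apply] using congr_fun₂ hUtU m m'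

theorem Orthonormal.sum_norm_sq_sum_smul [DecidableEq ι] {V : Type*} [NormedAddCommGroup V]
    [InnerProductSpace ℝ V] {u : ι → EuclideanSpace ℝ ι} (hu : Orthonormal ℝ u) (w : ι → V) :
    ∑ j, ‖∑ m, u j m • w m‖ ^ 2 = ∑ m, ‖w m‖ ^ 2 := by
  simp_rw [← real_inner_self_eq_norm_sq, sum_inner, inner_sum, real_inner_smul_left,
    real_inner_smul_right]
  calc ∑ j, ∑ m, ∑ m', u j m * (u j m' * ⟪w m, w m'⟫)
      = ∑ m, ∑ m', (∑ j, u j m * u j m') * ⟪w m, w m'⟫ := by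
        rw [sum_comm]
        refine sum_congr rfl fun m _ => ?_
        rw [sum_comm]
        simp_rw [sum_mul, mul_assoc]
    _ = ∑ m, ⟪w m, w m⟫ := by
        simp [hu.transpose_sum_apply_mul_apply]

theorem Orthonormal.norm_sum_smul_sq {V : Type*} [NormedAddCommGroup V] [InnerProductSpace ℝ V]
    {v : κ → V} (hv : Orthonormal ℝ v) (a : κ → ℝ) (s : Finset κ) :
    ‖∑ j ∈ s, a j • v j‖ ^ 2 = ∑ j ∈ s, a j ^ 2 := by
  rw [← real_inner_self_eq_norm_sq, hv.inner_sum]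
  simp [sq]

end Orthonormal

section EuclideanSpace

variable {η : Type*} [Fintype η] [DecidableEq η]

theorem LinearMap.apply_eq_sum_smul_single {V : Type*} [AddCommGroup V] [Module ℝ V]
    (A : EuclideanSpace ℝ η →ₗ[ℝ] V) (y : EuclideanSpace ℝ η) :
    A y = ∑ n, y n • A (EuclideanSpace.single n 1) := by
  conv_lhs => rw [← (EuclideanSpace.basisFun η ℝ).sum_repr y]
  simp

theorem LinearMap.adjoint_apply_eq_inner_single {W : Type*}
    [NormedAddCommGroup W] [InnerProductSpace ℝ W] [FiniteDimensional ℝ W]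
    (L : EuclideanSpace ℝ η →ₗ[ℝ] W) (w : W) (n : η) :
    LinearMap.adjoint L w n = ⟪L (EuclideanSpace.single n 1), w⟫ := by
  have h := EuclideanSpace.inner_single_left n (1 : ℝ) (LinearMap.adjoint L w)
  rw [LinearMap.adjoint_inner_right] at h
  simpa using h.symm

end EuclideanSpace

section Blocks

variable {ι : Type*} {κ : ι → Type*} [DecidableEq ι] [∀ i, DecidableEq (κ i)]
  [∀ i, Fintype (κ i)]

/-- `blockEmbed i (u i j)` are the columns of `diag(u 1, …, u r)`. -/
noncomputable def blockEmbed (i : ι) (v : EuclideanSpace ℝ (κ i)) :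
    EuclideanSpace ℝ ((i : ι) × κ i) :=
  ∑ m, v m • EuclideanSpace.single ⟨i, m⟩ 1

theorem LinearMap.map_blockEmbed {V : Type*} [AddCommGroup V] [Module ℝ V]
    (A : EuclideanSpace ℝ ((i : ι) × κ i) →ₗ[ℝ] V) (i : ι) (v : EuclideanSpace ℝ (κ i)) :
    A (blockEmbed i v) = ∑ m, v m • A (EuclideanSpace.single ⟨i, m⟩ 1) := by
  simp [blockEmbed]

theorem inner_blockEmbed_right [Fintype ι] (y : EuclideanSpace ℝ ((i : ι) × κ i)) (i : ι)
    (v : EuclideanSpace ℝ (κ i)) : ⟪y, blockEmbed i v⟫ = ∑ m, v m * y ⟨i, m⟩ := by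
  simp [blockEmbed, inner_sum, real_inner_smul_right, EuclideanSpace.inner_single_right]

theorem frobInner_self_eq_sum_sum_blockEmbed [Fintype ι] {V : Type*} [NormedAddCommGroup V]
    [InnerProductSpace ℝ V] [FiniteDimensional ℝ V]
    (A : EuclideanSpace ℝ ((i : ι) × κ i) →ₗ[ℝ] V) {u : ∀ i, κ i → EuclideanSpace ℝ (κ i)}
    (hu : ∀ i, Orthonormal ℝ (u i)) :
    frobInner A A = ∑ i, ∑ j, ‖A (blockEmbed i (u i j))‖ ^ 2 := by
  rw [frobInner_self_eq_sum_norm_sq A (EuclideanSpace.basisFun _ ℝ), Fintype.sum_sigma]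
  refine sum_congr rfl fun i _ => ?_
  simp_rw [A.map_blockEmbed, (hu i).sum_norm_sq_sum_smul, EuclideanSpace.basisFun_apply]

theorem LinearMap.adjoint_apply_blockEmbed [Fintype ι] {η α β : Type*} [Fintype η]
    [DecidableEq η] [Fintype β] [DecidableEq α]
    {L : EuclideanSpace ℝ η →ₗ[ℝ] EuclideanSpace ℝ ((i : ι) × κ i)} {i : ι}
    {u : α → EuclideanSpace ℝ (κ i)} (hu : Orthonormal ℝ u) {g : β → α} {c : η → β → ℝ}
    (hL : ∀ n m, L (EuclideanSpace.single n 1) ⟨i, m⟩ = ∑ b, c n b * u (g b) m) (a : α) (n : η) :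
    LinearMap.adjoint L (blockEmbed i (u a)) n = ∑ b, if g b = a then c n b else 0 := by
  rw [adjoint_apply_eq_inner_single, inner_blockEmbed_right]
  simp_rw [hL, mul_sum]
  rw [sum_comm]
  refine sum_congr rfl fun b _ => ?_
  simp_rw [mul_left_comm _ (c n b), ← mul_sum, hu.sum_apply_mul_apply, mul_ite, mul_one,
    mul_zero]
  exact if_congr eq_comm rfl rfl

end Blocks

theorem sub_comp_adjoint_apply_eq_sum_filter_le {W V : Type*}
    [NormedAddCommGroup W] [InnerProductSpace ℝ W] [FiniteDimensional ℝ W]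
    [NormedAddCommGroup V] [InnerProductSpace ℝ V] {M K : ℕ} (hM : M ≤ K)
    (S : W →ₗ[ℝ] V) (Ψ : EuclideanSpace ℝ (Fin M) →ₗ[ℝ] V)
    (L : EuclideanSpace ℝ (Fin M) →ₗ[ℝ] W) {τ a : Fin K → ℝ} {Φ : Fin K → V}
    (hΨ : ∀ n, Ψ (EuclideanSpace.single n 1) = τ (Fin.castLE hM n) • Φ (Fin.castLE hM n))
    {x : W} (hL : ∀ n, LinearMap.adjoint L x n = a (Fin.castLE hM n))
    (hS : S x = ∑ jK, (τ jK * a jK) • Φ jK) :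
    (S - Ψ ∘ₗ LinearMap.adjoint L) x
      = ∑ jK ∈ univ.filter (fun jK : Fin K => M ≤ (jK : ℕ)), (τ jK * a jK) • Φ jK := by
  rw [LinearMap.sub_apply, LinearMap.comp_apply, hS, ← Fin.sum_castLE_add_sum_filter_le hM,
    Ψ.apply_eq_sum_smul_single]
  simp_rw [hL, hΨ, smul_smul, mul_comm (a _)]
  exact add_sub_cancel_left _ _

theorem hapod_low_rank_factorization_general
    {V : Type*} [NormedAddCommGroup V] [InnerProductSpace ℝ V] [FiniteDimensional ℝ V]
    {r : ℕ} (k N : Fin r → ℕ) (hN : ∀ i, N i ≤ k i)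
    (s : ∀ i, Fin (k i) → V)
    -- local SVDs
    (σ : ∀ i, Fin (k i) → ℝ) (φ : ∀ i, Fin (k i) → V)
    (lam : ∀ i, Fin (k i) → EuclideanSpace ℝ (Fin (k i)))
    (hφ : ∀ i, Orthonormal ℝ (φ i)) (hlam : ∀ i, Orthonormal ℝ (lam i))
    (hs : ∀ i m, s i m = ∑ j, (σ i j * lam i j m) • φ i j)
    (ε : Fin r → ℝ)
    (hloc : ∀ i, ∑ j ∈ univ.filter (fun j : Fin (k i) => N i ≤ (j : ℕ)), σ i j ^ 2 ≤ ε i ^ 2)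
    -- SVD of the concatenated retained scaled modes
    {K : ℕ} (e : ((i : Fin r) × Fin (N i)) ≃ Fin K)
    (τ : Fin K → ℝ) (Φ : Fin K → V) (μ : Fin K → EuclideanSpace ℝ (Fin K))
    (hΦ : Orthonormal ℝ Φ) (hμ : Orthonormal ℝ μ)
    (hQ : ∀ i (n : Fin (N i)),
      σ i (Fin.castLE (hN i) n) • φ i (Fin.castLE (hN i) n)
        = ∑ jK, (τ jK * μ jK (e ⟨i, n⟩)) • Φ jK)
    (M : ℕ) (hM : M ≤ K) (ερ : ℝ)
    (hroot : ∑ jK ∈ univ.filter (fun jK : Fin K => M ≤ (jK : ℕ)), τ jK ^ 2 ≤ ερ ^ 2)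
    -- the full snapshot map
    (Sfull : EuclideanSpace ℝ ((i : Fin r) × Fin (k i)) →ₗ[ℝ] V)
    (hSfull : ∀ i m, Sfull (EuclideanSpace.single ⟨i, m⟩ 1) = s i m)
    -- retained scaled left-singular factor Ψ and composed right factor Λ̃
    (Ψ : EuclideanSpace ℝ (Fin M) →ₗ[ℝ] V)
    (hΨ : ∀ n : Fin M, Ψ (EuclideanSpace.single n 1)
        = τ (Fin.castLE hM n) • Φ (Fin.castLE hM n))
    (Λt : EuclideanSpace ℝ (Fin M) →ₗ[ℝ] EuclideanSpace ℝ ((i : Fin r) × Fin (k i)))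
    (hΛt : ∀ (n : Fin M) (i : Fin r) (m : Fin (k i)),
      Λt (EuclideanSpace.single n 1) ⟨i, m⟩
        = ∑ j : Fin (N i), μ (Fin.castLE hM n) (e ⟨i, j⟩) * lam i (Fin.castLE (hN i) j) m) :
    frobInner (Sfull - Ψ ∘ₗ LinearMap.adjoint Λt) (Sfull - Ψ ∘ₗ LinearMap.adjoint Λt)
      ≤ ερ ^ 2 + ∑ i, ε i ^ 2 := by
  set Err := Sfull - Ψ ∘ₗ LinearMap.adjoint Λt
  have hS i j : Sfull (blockEmbed i (lam i j)) = σ i j • φ i j := by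
    rw [Sfull.map_blockEmbed]
    exact (hlam i).sum_smul_eq_of_forall_eq_sum _ _ (fun m => (hSfull i m).trans (hs i m)) j
  have hadj i := Λt.adjoint_apply_blockEmbed (hlam i) (fun n m => hΛt n i m)
  have hdiscarded i (j : Fin (k i)) (hj : N i ≤ j) :
      ‖Err (blockEmbed i (lam i j))‖ ^ 2 = σ i j ^ 2 := by
    have h0 : LinearMap.adjoint Λt (blockEmbed i (lam i j)) = 0 := by
      ext n
      simp [hadj, fun j' => Fin.castLE_ne_of_le (hN i) j' hj]
    rw [LinearMap.sub_apply, LinearMap.comp_apply, h0, map_zero, sub_zero, hS, norm_smul,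
      (hφ i).1, mul_one, Real.norm_eq_abs, sq_abs]
  have hretained i (j : Fin (N i)) :
      ‖Err (blockEmbed i (lam i (Fin.castLE (hN i) j)))‖ ^ 2
        = ∑ jK ∈ univ.filter (fun jK : Fin K => M ≤ (jK : ℕ)), (τ jK * μ jK (e ⟨i, j⟩)) ^ 2 := by
    rw [sub_comp_adjoint_apply_eq_sum_filter_le hM Sfull Ψ Λt hΨ (a := fun jK => μ jK (e ⟨i, j⟩))
      (fun n => by simp [hadj]) ((hS i _).trans (hQ i j)), hΦ.norm_sum_smul_sq]
  calc frobInner Err Err = ∑ i, ∑ j, ‖Err (blockEmbed i (lam i j))‖ ^ 2 :=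
        frobInner_self_eq_sum_sum_blockEmbed Err hlam
    _ = ∑ p, ∑ jK ∈ univ.filter (fun jK : Fin K => M ≤ (jK : ℕ)), (τ jK * μ jK (e p)) ^ 2
          + ∑ i, ∑ j ∈ univ.filter (fun j : Fin (k i) => N i ≤ (j : ℕ)), σ i j ^ 2 := by
        rw [Fintype.sum_sigma, ← sum_add_distrib]
        refine sum_congr rfl fun i _ => ?_
        rw [← Fin.sum_castLE_add_sum_filter_le (hN i)]
        exact congrArg₂ (· + ·) (sum_congr rfl fun j _ => hretained i j)
          (sum_congr rfl fun j hj => hdiscarded i j (mem_filter.mp hj).2)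
    _ ≤ ερ ^ 2 + ∑ i, ε i ^ 2 := by
        rw [e.sum_comp (fun κ => ∑ jK ∈ _, (τ jK * μ jK κ) ^ 2), hμ.sum_sum_mul_apply_sq]
        exact add_le_add hroot (sum_le_sum fun i _ => hloc i)

/-- two-level HAPOD low-rank factorization: with local truncated SVDs of the
blocks `S_i` (tolerances `ε i`) and a second truncated SVD `Ψ ∘ Λ*` of the concatenated
retained scaled modes (tolerance `ερ`), the factorization `Ψ ∘ Λ̃*` with
`Λ̃ = diag(Λ₁,...,Λᵣ) ∘ Λ` satisfies `‖S̲ − Ψ∘Λ̃*‖_HS² ≤ ερ² + ∑ᵢ εᵢ²`. -/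
theorem hapod_low_rank_factorization
    {V : Type*} [NormedAddCommGroup V] [InnerProductSpace ℝ V] [FiniteDimensional ℝ V]
    {r : ℕ} (k N : Fin r → ℕ) (hN : ∀ i, N i ≤ k i)
    (s : ∀ i, Fin (k i) → V)
    -- local SVDs
    (σ : ∀ i, Fin (k i) → ℝ) (φ : ∀ i, Fin (k i) → V)
    (lam : ∀ i, Fin (k i) → EuclideanSpace ℝ (Fin (k i)))
    (hσa : ∀ i, Antitone (σ i)) (hσ0 : ∀ i j, 0 ≤ σ i j)
    (hφ : ∀ i, Orthonormal ℝ (φ i)) (hlam : ∀ i, Orthonormal ℝ (lam i))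
    (hs : ∀ i m, s i m = ∑ j, (σ i j * lam i j m) • φ i j)
    (ε : Fin r → ℝ)
    (hloc : ∀ i, ∑ j ∈ univ.filter (fun j : Fin (k i) => N i ≤ (j : ℕ)), σ i j ^ 2 ≤ ε i ^ 2)
    -- SVD of the concatenated retained scaled modes
    {K : ℕ} (e : ((i : Fin r) × Fin (N i)) ≃ Fin K)
    (τ : Fin K → ℝ) (Φ : Fin K → V) (μ : Fin K → EuclideanSpace ℝ (Fin K))
    (hτa : Antitone τ) (hτ0 : ∀ j, 0 ≤ τ j)
    (hΦ : Orthonormal ℝ Φ) (hμ : Orthonormal ℝ μ)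
    (hQ : ∀ i (n : Fin (N i)),
      σ i (Fin.castLE (hN i) n) • φ i (Fin.castLE (hN i) n)
        = ∑ jK, (τ jK * μ jK (e ⟨i, n⟩)) • Φ jK)
    (M : ℕ) (hM : M ≤ K) (ερ : ℝ)
    (hroot : ∑ jK ∈ univ.filter (fun jK : Fin K => M ≤ (jK : ℕ)), τ jK ^ 2 ≤ ερ ^ 2)
    -- the full snapshot map
    (Sfull : EuclideanSpace ℝ ((i : Fin r) × Fin (k i)) →ₗ[ℝ] V)
    (hSfull : ∀ i m, Sfull (EuclideanSpace.single ⟨i, m⟩ 1) = s i m)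
    -- retained scaled left-singular factor Ψ and composed right factor Λ̃
    (Ψ : EuclideanSpace ℝ (Fin M) →ₗ[ℝ] V)
    (hΨ : ∀ n : Fin M, Ψ (EuclideanSpace.single n 1)
        = τ (Fin.castLE hM n) • Φ (Fin.castLE hM n))
    (Λt : EuclideanSpace ℝ (Fin M) →ₗ[ℝ] EuclideanSpace ℝ ((i : Fin r) × Fin (k i)))
    (hΛt : ∀ (n : Fin M) (i : Fin r) (m : Fin (k i)),
      Λt (EuclideanSpace.single n 1) ⟨i, m⟩
        = ∑ j : Fin (N i), μ (Fin.castLE hM n) (e ⟨i, j⟩) * lam i (Fin.castLE (hN i) j) m) :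
    frobInner (Sfull - Ψ ∘ₗ LinearMap.adjoint Λt) (Sfull - Ψ ∘ₗ LinearMap.adjoint Λt)
      ≤ ερ ^ 2 + ∑ i, ε i ^ 2 :=
  hapod_low_rank_factorization_general k N hN s σ φ lam hφ hlam hs ε hloc e τ Φ μ hΦ hμ hQ M hM ερ
    hroot Sfull hSfull Ψ hΨ Λt hΛt
end
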